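/- arXiv:1403.1768 — 4 statements merged into one kernel-verified Lean document; each statement's English description precedes it below -/
import Mathlib

section
/- For every real ε > 0, every finite simple graph G = (V,E) admits a partition P of its vertex set into at most T(⌊ε^{-2}/16⌋ + 2) nonempty parts such that irreg(P) ≤ ε|V|². -/
open Finset

/-- The tower function: `tower 0 = 1`, `tower (n+1) = 2 ^ tower n`, so `tower 1 = 2`. -/
def tower : ℕ → ℕ
  | 0 => 1
  | n + 1 => 2 ^ tower n

open scoped Classical in
/-- The number of ordered pairs `(x,y) ∈ X × Y` that are edges of `G`. -/
noncomputable def edgeCount {V : Type*} [Fintype V] (G : SimpleGraph V) (X Y : Finset V) : ℝ :=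
  ∑ x ∈ X, ∑ y ∈ Y, if G.Adj x y then (1 : ℝ) else 0

/-- The edge density between `X` and `Y`. -/
noncomputable def density {V : Type*} [Fintype V] (G : SimpleGraph V) (X Y : Finset V) : ℝ :=
  edgeCount G X Y / ((X.card : ℝ) * (Y.card : ℝ))

/-- The irregularity of the pair `X, Y`. -/
noncomputable def irregPair {V : Type*} [Fintype V] [DecidableEq V] (G : SimpleGraph V)
    (X Y : Finset V) : ℝ :=
  (X.powerset ×ˢ Y.powerset).sup'
    ⟨(∅, ∅), by simp⟩
    (fun UW => |edgeCount G UW.1 UW.2 - (UW.1.card : ℝ) * (UW.2.card : ℝ) * density G X Y|)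

/-- The irregularity of a vertex partition. -/
noncomputable def irregPartition {V : Type*} [Fintype V] [DecidableEq V] (G : SimpleGraph V)
    (P : Finset (Finset V)) : ℝ :=
  ∑ X ∈ P, ∑ Y ∈ P, irregPair G X Y

/-- `P` is a partition of the vertex set into nonempty parts. -/
def IsPartition {V : Type*} [Fintype V] [DecidableEq V] (P : Finset (Finset V)) : Prop :=
  (∀ p ∈ P, p.Nonempty) ∧ (∀ p ∈ P, ∀ q ∈ P, p ≠ q → Disjoint p q) ∧
    P.biUnion id = Finset.univ


/-! Energy increment. The energy `∑ e(X,Y)² / (|X| |Y|)` of a partition of `V` lies between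
`e(V,V)² / |V|²` and `e(V,V)`, an interval of length at most `|V|² / 4`. If the irregularity of
`P` exceeds `ε |V|²`, refining every part `X` by the atoms of the witness sets `U ⊆ X`, `W ⊆ X` of
all pairs through `X` gives at most `|P| 4^|P|` parts, and Cauchy–Schwarz shows that the energy
grows by at least `4 irreg(P)² / |V|² > 4 ε² |V|²`. Hence at most `⌊ε⁻² / 16⌋` refinements are
needed, starting from the trivial partition, and each one raises the tower height by one. -/

lemma tower_mono : Monotone tower :=
  monotone_nat_of_le_succ fun _ => Nat.lt_two_pow_self.le

lemma four_mul_mul_four_pow_le_tower_succ {k n : ℕ} (h : 4 * k ≤ tower n) :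
    4 * (k * 4 ^ k) ≤ tower (n + 1) :=
  calc 4 * (k * 4 ^ k) = 4 * k * 4 ^ k := by ring
    _ ≤ 4 ^ k * 4 ^ k := Nat.mul_le_mul_right _ (Nat.mul_le_pow (by decide) k)
    _ = 2 ^ (4 * k) := by rw [← pow_add, show 4 = 2 ^ 2 from rfl, ← pow_mul]; ring_nf
    _ ≤ 2 ^ tower n := Nat.pow_le_pow_right two_pos h

/- Cauchy–Schwarz with a defect term. The deviations `D i = x i - w i * m` from the mean
`m = (∑ x) / ∑ w` sum to zero, so `∑ x² / w = (∑ x)² / ∑ w + ∑ D² / w`, and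
`∑ |D| ≥ 2 |∑ᵢ∈ₜ D i|`; Cauchy–Schwarz bounds `∑ D² / w` below by `(∑ |D|)² / ∑ w`. -/
lemma sq_sum_div_add_sq_defect_le_sum_sq_div {ι : Type*} {s t : Finset ι} (hts : t ⊆ s)
    (x : ι → ℝ) {w : ι → ℝ} (hw : ∀ i ∈ s, 0 < w i) :
    (∑ i ∈ s, x i) ^ 2 / ∑ i ∈ s, w i
        + (2 * |∑ i ∈ t, x i - (∑ i ∈ t, w i) * ((∑ i ∈ s, x i) / ∑ i ∈ s, w i)|) ^ 2
          / ∑ i ∈ s, w i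
      ≤ ∑ i ∈ s, x i ^ 2 / w i := by
  classical
  rcases s.eq_empty_or_nonempty with rfl | hs
  · simp [subset_empty.1 hts]
  set S := ∑ i ∈ s, w i
  set m := (∑ i ∈ s, x i) / S
  set D := fun i => x i - w i * m
  have hS : 0 < S := sum_pos hw hs
  have hD_sum : ∑ i ∈ s, D i = 0 := by
    simp only [D, m, sum_sub_distrib, ← sum_mul]
    field_simp
    ring
  have hD_t : ∑ i ∈ t, D i = ∑ i ∈ t, x i - (∑ i ∈ t, w i) * m := by
    simp only [D, sum_sub_distrib, sum_mul]
  have hsplit : ∑ i ∈ s, x i ^ 2 / w i = (∑ i ∈ s, x i) ^ 2 / S + ∑ i ∈ s, D i ^ 2 / w i := by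
    have hpt : ∀ i ∈ s, x i ^ 2 / w i = D i ^ 2 / w i + 2 * m * D i + m ^ 2 * w i := by
      intro i hi
      have := (hw i hi).ne'
      simp only [D]
      field_simp
      ring
    rw [sum_congr rfl hpt, sum_add_distrib, sum_add_distrib, ← mul_sum, ← mul_sum, hD_sum]
    simp only [m]
    field_simp
    ring
  have hdefect : 2 * |∑ i ∈ t, D i| ≤ ∑ i ∈ s, |D i| := by
    have hcompl : ∑ i ∈ s \ t, D i = -∑ i ∈ t, D i := by
      linarith [sum_sdiff hts (f := D)]
    calc 2 * |∑ i ∈ t, D i| = |∑ i ∈ s \ t, D i| + |∑ i ∈ t, D i| := by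
          rw [hcompl, abs_neg]; ring
      _ ≤ ∑ i ∈ s \ t, |D i| + ∑ i ∈ t, |D i| :=
          add_le_add (abs_sum_le_sum_abs _ _) (abs_sum_le_sum_abs _ _)
      _ = ∑ i ∈ s, |D i| := sum_sdiff hts
  have hCS : (∑ i ∈ s, |D i|) ^ 2 / S ≤ ∑ i ∈ s, D i ^ 2 / w i := by
    simpa only [sq_abs] using sq_sum_div_le_sum_sq_div s (fun i => |D i|) hw
  rw [hsplit, ← hD_t]
  gcongr
  exact hCS.trans' (by gcongr)

section EdgeCount

variable {V : Type*} [Fintype V] (G : SimpleGraph V)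

lemma edgeCount_nonneg (X Y : Finset V) : 0 ≤ edgeCount G X Y :=
  sum_nonneg fun _ _ => sum_nonneg fun _ _ => by split_ifs <;> norm_num

lemma edgeCount_le_card_mul_card (X Y : Finset V) : edgeCount G X Y ≤ #X * #Y := by
  unfold edgeCount
  calc _ ≤ ∑ _x ∈ X, ∑ _y ∈ Y, (1 : ℝ) := by gcongr; split_ifs <;> norm_num
    _ = #X * #Y := by simp

variable [DecidableEq V] {𝒜 ℬ : Finset (Finset V)}

lemma edgeCount_biUnion_left (h𝒜 : (𝒜 : Set (Finset V)).PairwiseDisjoint id) (Y : Finset V) :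
    edgeCount G (𝒜.biUnion id) Y = ∑ a ∈ 𝒜, edgeCount G a Y :=
  sum_biUnion h𝒜

lemma edgeCount_biUnion_right (X : Finset V) (hℬ : (ℬ : Set (Finset V)).PairwiseDisjoint id) :
    edgeCount G X (ℬ.biUnion id) = ∑ b ∈ ℬ, edgeCount G X b := by
  unfold edgeCount
  rw [sum_comm]
  simp only [sum_biUnion hℬ]
  exact sum_congr rfl fun _ _ => sum_comm

lemma edgeCount_biUnion (h𝒜 : (𝒜 : Set (Finset V)).PairwiseDisjoint id)
    (hℬ : (ℬ : Set (Finset V)).PairwiseDisjoint id) :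
    edgeCount G (𝒜.biUnion id) (ℬ.biUnion id) = ∑ p ∈ 𝒜 ×ˢ ℬ, edgeCount G p.1 p.2 := by
  rw [sum_product, edgeCount_biUnion_left G h𝒜]
  exact sum_congr rfl fun a _ => edgeCount_biUnion_right G a hℬ

omit [Fintype V] in
lemma card_biUnion_mul_card_biUnion (h𝒜 : (𝒜 : Set (Finset V)).PairwiseDisjoint id)
    (hℬ : (ℬ : Set (Finset V)).PairwiseDisjoint id) :
    (#(𝒜.biUnion id) : ℝ) * #(ℬ.biUnion id) = ∑ p ∈ 𝒜 ×ˢ ℬ, (#p.1 : ℝ) * #p.2 := by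
  rw [card_biUnion h𝒜, card_biUnion hℬ, sum_product, Nat.cast_sum, Nat.cast_sum, sum_mul_sum]
  simp

omit [Fintype V] in
lemma Finpartition.card_mul_card_pos {X Y : Finset V} (A : Finpartition X) (B : Finpartition Y)
    {p : Finset V × Finset V} (hp : p ∈ A.parts ×ˢ B.parts) : (0 : ℝ) < #p.1 * #p.2 := by
  obtain ⟨h₁, h₂⟩ := mem_product.1 hp
  have := (A.nonempty_of_mem_parts h₁).card_pos
  have := (B.nonempty_of_mem_parts h₂).card_pos
  positivity

lemma sq_edgeCount_div_add_sq_deviation_le {X Y : Finset V} (A : Finpartition X)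
    (B : Finpartition Y) (h𝒜 : 𝒜 ⊆ A.parts) (hℬ : ℬ ⊆ B.parts) :
    edgeCount G X Y ^ 2 / (#X * #Y)
        + (2 * |edgeCount G (𝒜.biUnion id) (ℬ.biUnion id)
            - #(𝒜.biUnion id) * #(ℬ.biUnion id) * density G X Y|) ^ 2 / (#X * #Y)
      ≤ ∑ a ∈ A.parts, ∑ b ∈ B.parts, edgeCount G a b ^ 2 / (#a * #b) := by
  have key := sq_sum_div_add_sq_defect_le_sum_sq_div (product_subset_product h𝒜 hℬ)
    (fun p => edgeCount G p.1 p.2) fun _ => A.card_mul_card_pos B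
  have hA := A.disjoint
  have hB := B.disjoint
  rwa [← edgeCount_biUnion G hA hB, ← card_biUnion_mul_card_biUnion hA hB,
    ← edgeCount_biUnion G (hA.subset h𝒜) (hB.subset hℬ),
    ← card_biUnion_mul_card_biUnion (hA.subset h𝒜) (hB.subset hℬ), A.biUnion_parts,
    B.biUnion_parts, sum_product] at key

lemma exists_irregPair_eq (X Y : Finset V) :
    ∃ U ⊆ X, ∃ W ⊆ Y,
      |edgeCount G U W - #U * #W * density G X Y| = irregPair G X Y := by
  obtain ⟨⟨U, W⟩, hUW, h⟩ := exists_mem_eq_sup' (s := X.powerset ×ˢ Y.powerset) ⟨(∅, ∅), by simp⟩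
    fun UW => |edgeCount G UW.1 UW.2 - #UW.1 * #UW.2 * density G X Y|
  simp only [mem_product, mem_powerset] at hUW
  exact ⟨U, hUW.1, W, hUW.2, h.symm⟩

end EdgeCount

section Energy

variable {V : Type*} [Fintype V] [DecidableEq V] (G : SimpleGraph V)

noncomputable def energy (P : Finset (Finset V)) : ℝ :=
  ∑ X ∈ P, ∑ Y ∈ P, edgeCount G X Y ^ 2 / (#X * #Y)

omit [Fintype V] in
lemma Finpartition.sum_bind_parts {s : Finset V} (P : Finpartition s)
    (R : ∀ t : Finset V, Finpartition t) {M : Type*} [AddCommMonoid M] (f : Finset V → M) :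
    ∑ a ∈ (P.bind fun t _ => R t).parts, f a = ∑ t ∈ P.parts, ∑ a ∈ (R t).parts, f a := by
  rw [Finpartition.bind, Finpartition.copy_parts, Finpartition.sum_combine]
  exact sum_attach P.parts fun t => ∑ a ∈ (R t).parts, f a

lemma energy_bind {s : Finset V} (P : Finpartition s) (R : ∀ t : Finset V, Finpartition t) :
    energy G (P.bind fun t _ => R t).parts
      = ∑ X ∈ P.parts, ∑ Y ∈ P.parts, ∑ a ∈ (R X).parts, ∑ b ∈ (R Y).parts,
          edgeCount G a b ^ 2 / (#a * #b) := by
  simp only [energy, Finpartition.sum_bind_parts]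
  exact sum_congr rfl fun _ _ => sum_comm

lemma Finpartition.sum_card_mul_card (P : Finpartition (univ : Finset V)) :
    ∑ p ∈ P.parts ×ˢ P.parts, (#p.1 : ℝ) * #p.2 = (Fintype.card V : ℝ) ^ 2 := by
  rw [← card_biUnion_mul_card_biUnion P.disjoint P.disjoint, P.biUnion_parts, card_univ, sq]

lemma sq_edgeCount_univ_div_le_energy (P : Finpartition (univ : Finset V)) :
    edgeCount G univ univ ^ 2 / (Fintype.card V : ℝ) ^ 2 ≤ energy G P.parts := by
  have := sq_sum_div_le_sum_sq_div _ (fun p => edgeCount G p.1 p.2)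
    fun _ => P.card_mul_card_pos P
  rwa [← edgeCount_biUnion G P.disjoint P.disjoint, P.biUnion_parts, P.sum_card_mul_card,
    sum_product] at this

lemma energy_le_edgeCount_univ (P : Finpartition (univ : Finset V)) :
    energy G P.parts ≤ edgeCount G univ univ := by
  calc energy G P.parts ≤ ∑ p ∈ P.parts ×ˢ P.parts, edgeCount G p.1 p.2 := by
        rw [energy, ← sum_product']
        refine sum_le_sum fun p hp => ?_
        rw [div_le_iff₀ (P.card_mul_card_pos P hp), sq]
        exact mul_le_mul_of_nonneg_left (edgeCount_le_card_mul_card G _ _)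
          (edgeCount_nonneg G _ _)
    _ = edgeCount G univ univ := by
        rw [← edgeCount_biUnion G P.disjoint P.disjoint, P.biUnion_parts]

lemma energy_add_le_energy_bind {s : Finset V} (P : Finpartition s)
    (R : ∀ t : Finset V, Finpartition t)
    (hR : ∀ X ∈ P.parts, ∀ Y ∈ P.parts, ∃ 𝒰 ⊆ (R X).parts, ∃ 𝒲 ⊆ (R Y).parts,
      |edgeCount G (𝒰.biUnion id) (𝒲.biUnion id)
        - #(𝒰.biUnion id) * #(𝒲.biUnion id) * density G X Y| = irregPair G X Y) :
    energy G P.parts + ∑ X ∈ P.parts, ∑ Y ∈ P.parts, (2 * irregPair G X Y) ^ 2 / (#X * #Y)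
      ≤ energy G (P.bind fun t _ => R t).parts := by
  rw [energy_bind, energy, ← sum_add_distrib]
  refine sum_le_sum fun X hX => ?_
  rw [← sum_add_distrib]
  refine sum_le_sum fun Y hY => ?_
  obtain ⟨𝒰, h𝒰, 𝒲, h𝒲, h⟩ := hR X hX Y hY
  rw [← h]
  exact sq_edgeCount_div_add_sq_deviation_le G (R X) (R Y) h𝒰 h𝒲

lemma four_mul_sq_irregPartition_div_le (P : Finpartition (univ : Finset V)) :
    4 * irregPartition G P.parts ^ 2 / (Fintype.card V : ℝ) ^ 2
      ≤ ∑ X ∈ P.parts, ∑ Y ∈ P.parts, (2 * irregPair G X Y) ^ 2 / (#X * #Y) := by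
  have := sq_sum_div_le_sum_sq_div _ (fun p => 2 * irregPair G p.1 p.2)
    fun _ => P.card_mul_card_pos P
  rw [P.sum_card_mul_card, sum_product, sum_product] at this
  simpa only [← mul_sum, mul_pow, irregPartition, show (2 : ℝ) ^ 2 = 4 by norm_num] using this

lemma exists_refinement_energy_add_le (P : Finpartition (univ : Finset V)) :
    ∃ Q : Finpartition (univ : Finset V), #Q.parts ≤ #P.parts * 4 ^ #P.parts ∧
      energy G P.parts + 4 * irregPartition G P.parts ^ 2 / (Fintype.card V : ℝ) ^ 2
        ≤ energy G Q.parts := by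
  choose u hu w hw hirreg using exists_irregPair_eq G
  let F (X : Finset V) := P.parts.image (u X) ∪ P.parts.image (w · X)
  let R (X : Finset V) := Finpartition.atomise X (F X)
  refine ⟨P.bind fun X _ => R X, ?_, ?_⟩
  · rw [Finpartition.card_bind, sum_attach P.parts fun X => #(R X).parts, ← smul_eq_mul,
      ← sum_const]
    refine sum_le_sum fun X _ => Finpartition.card_atomise_le.trans ?_
    calc 2 ^ #(F X) ≤ 2 ^ (#P.parts + #P.parts) :=
          Nat.pow_le_pow_right two_pos <| (card_union_le _ _).trans <|
            add_le_add card_image_le card_image_le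
      _ = 4 ^ #P.parts := by rw [← two_mul, pow_mul]; norm_num
  · refine (add_le_add_right (four_mul_sq_irregPartition_div_le G P) _).trans
      (energy_add_le_energy_bind G P R fun X hX Y hY => ?_)
    refine ⟨{c ∈ (R X).parts | c ⊆ u X Y ∧ c.Nonempty}, filter_subset _ _,
      {c ∈ (R Y).parts | c ⊆ w X Y ∧ c.Nonempty}, filter_subset _ _, ?_⟩
    rw [Finpartition.biUnion_filter_atomise (mem_union_left _ (mem_image_of_mem _ hY)) (hu X Y),
      Finpartition.biUnion_filter_atomise (mem_union_right _ (mem_image_of_mem (w · Y) hX))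
        (hw X Y)]
    exact hirreg X Y

lemma exists_refinement_of_lt_irregPartition {ε : ℝ} (hε : 0 ≤ ε)
    (P : Finpartition (univ : Finset V))
    (h : ε * (Fintype.card V : ℝ) ^ 2 < irregPartition G P.parts) :
    ∃ Q : Finpartition (univ : Finset V), #Q.parts ≤ #P.parts * 4 ^ #P.parts ∧
      energy G P.parts + 4 * ε ^ 2 * (Fintype.card V : ℝ) ^ 2 ≤ energy G Q.parts := by
  obtain ⟨Q, hcard, hQ⟩ := exists_refinement_energy_add_le G P
  refine ⟨Q, hcard, le_trans ?_ hQ⟩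
  rcases (sq_nonneg (Fintype.card V : ℝ)).eq_or_lt with hN | hN
  · simp [← hN]
  · calc energy G P.parts + 4 * ε ^ 2 * (Fintype.card V : ℝ) ^ 2
        = energy G P.parts + 4 * (ε * (Fintype.card V : ℝ) ^ 2) ^ 2 / (Fintype.card V : ℝ) ^ 2 := by
          field_simp
      _ ≤ _ := by gcongr

lemma exists_finpartition_irregPartition_le_or_energy_ge {ε : ℝ} (hε : 0 ≤ ε) (k : ℕ) :
    ∃ P : Finpartition (univ : Finset V), 4 * #P.parts ≤ tower (k + 2) ∧
      (irregPartition G P.parts ≤ ε * (Fintype.card V : ℝ) ^ 2 ∨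
        edgeCount G univ univ ^ 2 / (Fintype.card V : ℝ) ^ 2
          + k * (4 * ε ^ 2 * (Fintype.card V : ℝ) ^ 2) ≤ energy G P.parts) := by
  induction k with
  | zero =>
    refine ⟨⊤, ?_, Or.inr (by simpa using sq_edgeCount_univ_div_le_energy G ⊤)⟩
    have := card_le_card (Finpartition.parts_top_subset (univ : Finset V))
    rw [card_singleton] at this
    exact (Nat.mul_le_mul_left 4 this).trans le_rfl
  | succ k ih =>
    obtain ⟨P, hcard, hP⟩ := ih
    by_cases h : irregPartition G P.parts ≤ ε * (Fintype.card V : ℝ) ^ 2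
    · exact ⟨P, hcard.trans (tower_mono (by omega)), Or.inl h⟩
    obtain ⟨Q, hQcard, hQ⟩ := exists_refinement_of_lt_irregPartition G hε P (not_le.1 h)
    refine ⟨Q, (Nat.mul_le_mul_left 4 hQcard).trans (four_mul_mul_four_pow_le_tower_succ hcard),
      Or.inr ?_⟩
    push_cast
    linarith [hP.resolve_left h]

lemma irregPartition_le_of_energy_ge {ε : ℝ} (hε : 0 ≤ ε) {k : ℕ}
    (hk : 1 < 16 * ε ^ 2 * (k + 1)) (P : Finpartition (univ : Finset V))
    (hP : edgeCount G univ univ ^ 2 / (Fintype.card V : ℝ) ^ 2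
      + k * (4 * ε ^ 2 * (Fintype.card V : ℝ) ^ 2) ≤ energy G P.parts) :
    irregPartition G P.parts ≤ ε * (Fintype.card V : ℝ) ^ 2 := by
  by_contra! h
  obtain ⟨Q, -, hQ⟩ := exists_refinement_of_lt_irregPartition G hε P h
  obtain ⟨X, hX⟩ : P.parts.Nonempty :=
    nonempty_of_sum_ne_zero (h.trans_le' (by positivity)).ne'
  have hN : (0 : ℝ) < (Fintype.card V : ℝ) ^ 2 := by
    have := Fintype.card_pos_iff.2 ⟨(P.nonempty_of_mem_parts hX).choose⟩
    positivity
  set e := edgeCount G univ univ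
  have he : e ≤ e ^ 2 / (Fintype.card V : ℝ) ^ 2 + (Fintype.card V : ℝ) ^ 2 / 4 := by
    rw [div_add_div _ _ hN.ne' four_ne_zero, le_div_iff₀ (by positivity)]
    nlinarith [sq_nonneg (e - (Fintype.card V : ℝ) ^ 2 / 2)]
  have := energy_le_edgeCount_univ G Q
  nlinarith [mul_lt_mul_of_pos_right hk hN]

lemma Finpartition.isPartition (P : Finpartition (univ : Finset V)) :
    IsPartition P.parts :=
  ⟨fun _ => P.nonempty_of_mem_parts, fun _ hp _ hq => P.disjoint hp hq, P.biUnion_parts⟩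

end Energy

/-- Szemerédi's regularity lemma: every graph has a vertex partition into at most
`tower (⌊ε⁻²/16⌋ + 2)` nonempty parts with irregularity at most `ε |V|²`. -/
theorem regularity_upper_bound (ε : ℝ) (hε : 0 < ε) {V : Type*} [Fintype V] [DecidableEq V]
    (G : SimpleGraph V) :
    ∃ P : Finset (Finset V), IsPartition P ∧ P.card ≤ tower (⌊ε⁻¹ ^ 2 / 16⌋₊ + 2) ∧
      irregPartition G P ≤ ε * (Fintype.card V : ℝ) ^ 2 := by
  set K := ⌊ε⁻¹ ^ 2 / 16⌋₊
  obtain ⟨P, hcard, hP⟩ := exists_finpartition_irregPartition_le_or_energy_ge G hε.le K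
  have hK : 1 < 16 * ε ^ 2 * (K + 1) := by
    have : ε⁻¹ ^ 2 / 16 < K + 1 := Nat.lt_floor_add_one _
    rw [div_lt_iff₀ (by norm_num), inv_pow, inv_lt_iff_one_lt_mul₀' (by positivity)] at this
    linarith
  exact ⟨P.parts, P.isPartition, by omega,
    hP.elim id (irregPartition_le_of_energy_ge G hε.le hK P)⟩
end

section
/- Let T be a real-valued random variable on a probability space with E(T) = 0 and with finite second moment, and suppose a ≠ 0 is a real number such that P(T = a) = p with 0 < p < 1. Then E(T²) ≥ (p/(1−p))·a². -/
/-!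
For every `c`, the polynomial inequality `t² + 2ct + c² ≥ (a + c)² · 1[t = a]` holds (on `t = a` it is an
equality, elsewhere it says `(t + c)² ≥ 0`). Taking expectations at `t = T` for a centred `T` gives
`E T² ≥ (a + c)² q - c²` with `q = P(T = a)`, and the choice `c = a q / (1 - q)` turns the right-hand side
into `q a² / (1 - q)`.
-/

open MeasureTheory

section

variable {Ω : Type*} [MeasurableSpace Ω] {μ : Measure Ω} [IsProbabilityMeasure μ] {T : Ω → ℝ}

theorem sq_add_mul_measureReal_sub_sq_le_integral_sq (hT : MemLp T 2 μ)
    (hmean : ∫ ω, T ω ∂μ = 0) (a c : ℝ) :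
    (a + c) ^ 2 * μ.real {ω | T ω = a} - c ^ 2 ≤ ∫ ω, T ω ^ 2 ∂μ := by
  set A := {ω | T ω = a}
  have hA : NullMeasurableSet A μ :=
    hT.1.nullMeasurableSet_eq_fun aestronglyMeasurable_const
  have hTint : Integrable T μ := hT.integrable one_le_two
  have hind : Integrable (A.indicator fun _ ↦ (a + c) ^ 2) μ :=
    (integrable_const _).indicator₀ hA
  have hlin : Integrable (fun ω ↦ A.indicator (fun _ ↦ (a + c) ^ 2) ω - 2 * c * T ω) μ :=
    hind.sub (hTint.const_mul _)
  have hpointwise : ∀ ω, A.indicator (fun _ ↦ (a + c) ^ 2) ω - 2 * c * T ω - c ^ 2 ≤ T ω ^ 2 := by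
    intro ω
    by_cases hω : T ω = a
    · simp only [A, Set.indicator_of_mem (show ω ∈ A from hω), hω]
      nlinarith
    · simp only [A, Set.indicator_of_notMem (show ω ∉ A from hω)]
      nlinarith [sq_nonneg (T ω + c)]
  calc (a + c) ^ 2 * μ.real A - c ^ 2
      = ∫ ω, (A.indicator (fun _ ↦ (a + c) ^ 2) ω - 2 * c * T ω - c ^ 2) ∂μ := by
        rw [integral_sub hlin (integrable_const _),
          integral_sub hind (hTint.const_mul _), integral_indicator₀ hA, integral_const_mul,
          setIntegral_const, hmean]
        simp [mul_comm]
    _ ≤ ∫ ω, T ω ^ 2 ∂μ :=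
        integral_mono (hlin.sub (integrable_const _)) hT.integrable_sq hpointwise

theorem measureReal_div_one_sub_mul_sq_le_integral_sq (hT : MemLp T 2 μ)
    (hmean : ∫ ω, T ω ∂μ = 0) (a : ℝ) (hq : μ.real {ω | T ω = a} < 1) :
    μ.real {ω | T ω = a} / (1 - μ.real {ω | T ω = a}) * a ^ 2 ≤ ∫ ω, T ω ^ 2 ∂μ := by
  set q := μ.real {ω | T ω = a}
  have h1q : 1 - q ≠ 0 := by linarith
  convert sq_add_mul_measureReal_sub_sq_le_integral_sq hT hmean a (a * q / (1 - q)) using 1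
  field_simp
  ring

end

theorem second_moment_lower_bound_general {Ω : Type*} [MeasurableSpace Ω] (μ : Measure Ω)
    [IsProbabilityMeasure μ] (T : Ω → ℝ) (hL2 : MemLp T 2 μ)
    (hmean : ∫ ω, T ω ∂μ = 0) (a p : ℝ) (hp0 : 0 < p) (hp1 : p < 1)
    (hPa : μ {ω | T ω = a} = ENNReal.ofReal p) :
    p / (1 - p) * a ^ 2 ≤ ∫ ω, T ω ^ 2 ∂μ := by
  have hq : μ.real {ω | T ω = a} = p := by
    rw [measureReal_def, hPa, ENNReal.toReal_ofReal hp0.le]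
  simpa [hq] using measureReal_div_one_sub_mul_sq_le_integral_sq hL2 hmean a (hq ▸ hp1)

/-- If `T` is a square-integrable random variable with mean `0` that takes the value
`a ≠ 0` with probability `p`, `0 < p < 1`, then `E(T²) ≥ (p/(1-p))·a²`. -/
theorem second_moment_lower_bound {Ω : Type*} [MeasurableSpace Ω] (μ : Measure Ω)
    [IsProbabilityMeasure μ] (T : Ω → ℝ) (hInt : Integrable T μ) (hL2 : MemLp T 2 μ)
    (hmean : ∫ ω, T ω ∂μ = 0) (a p : ℝ) (ha : a ≠ 0) (hp0 : 0 < p) (hp1 : p < 1)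
    (hPa : μ {ω | T ω = a} = ENNReal.ofReal p) :
    p / (1 - p) * a ^ 2 ≤ ∫ ω, T ω ^ 2 ∂μ :=
  second_moment_lower_bound_general μ T hL2 hmean a p hp0 hp1 hPa
end

section
/- Let V be a finite set of N vertices and let w : V × V → [0,1] be a symmetric weight function (a weighted graph on N vertices with weights in [0,1]). Then there exists a symmetric function g : V × V → {0,1} (an unweighted graph on the same vertices) such that for every pair of subsets A, B ⊆ V, |Σ_{(x,y) ∈ A×B} g(x,y) − Σ_{(x,y) ∈ A×B} w(x,y)| ≤ 4N^{3/2}. -/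
/-!
Round each unordered pair `{x, y}` independently to an edge with probability `w x y`. For fixed
`A, B` the discrepancy is a sum over unordered pairs of independent centred variables, each
confined to an interval of length at most `2` (a pair occurs at most twice in `A × B`), so by
Hoeffding's inequality it reaches `4 N^(3/2)` with probability at most `2 exp (-8 N)`. A union
bound over the `4^N` choices of `(A, B)` leaves a rounding that works for all of them.
-/

open Finset

/-- The sum of weights over ordered pairs in `A × B` in a weighted graph `w`. -/
def weightSum {V : Type*} (w : V → V → ℝ) (A B : Finset V) : ℝ :=
  ∑ x ∈ A, ∑ y ∈ B, w x y

/-- The weighted edge density between `X` and `Y`. -/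
noncomputable def wDensity {V : Type*} (w : V → V → ℝ) (X Y : Finset V) : ℝ :=
  weightSum w X Y / ((X.card : ℝ) * (Y.card : ℝ))

/-- The irregularity of the pair `X, Y` in a weighted graph `w`. -/
noncomputable def wIrregPair {V : Type*} [DecidableEq V] (w : V → V → ℝ)
    (X Y : Finset V) : ℝ :=
  (X.powerset ×ˢ Y.powerset).sup'
    ⟨(∅, ∅), by simp⟩
    (fun UW => |weightSum w UW.1 UW.2 - (UW.1.card : ℝ) * (UW.2.card : ℝ) * wDensity w X Y|)

/-- The irregularity of a vertex partition in a weighted graph `w`. -/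
noncomputable def wIrregPartition {V : Type*} [DecidableEq V] (w : V → V → ℝ)
    (P : Finset (Finset V)) : ℝ :=
  ∑ X ∈ P, ∑ Y ∈ P, wIrregPair w X Y

open MeasureTheory ProbabilityTheory Real
open scoped NNReal

lemma card_sym2_le_sq {V : Type*} [Fintype V] [DecidableEq V] :
    Fintype.card (Sym2 V) ≤ Fintype.card V ^ 2 := by
  simpa [sq] using Fintype.card_le_of_surjective _ (Sym2.mk_surjective (α := V))

section Sym2Count

variable {V : Type*} [DecidableEq V]

def sym2Count (A B : Finset V) (e : Sym2 V) : ℕ :=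
  #{z ∈ A ×ˢ B | s(z.1, z.2) = e}

lemma sym2Count_le_two (A B : Finset V) (e : Sym2 V) : sym2Count A B e ≤ 2 := by
  induction e using Sym2.ind with
  | _ u v =>
    calc sym2Count A B s(u, v) ≤ #({(u, v), (v, u)} : Finset (V × V)) := by
          refine card_le_card fun ⟨x, y⟩ hz => ?_
          rcases Sym2.eq_iff.mp (mem_filter.mp hz).2 with ⟨rfl, rfl⟩ | ⟨rfl, rfl⟩ <;> simp
      _ ≤ 2 := card_le_two

lemma sum_sum_sym2_eq_sum_sym2Count_mul [Fintype V] (A B : Finset V) (f : Sym2 V → ℝ) :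
    ∑ x ∈ A, ∑ y ∈ B, f s(x, y) = ∑ e, (sym2Count A B e : ℝ) * f e := by
  rw [← sum_product' (f := fun x y => f s(x, y)),
    ← sum_fiberwise' (A ×ˢ B) (fun z => s(z.1, z.2)) f]
  simp [sym2Count]

end Sym2Count

section Probability

variable {Ω : Type*} {mΩ : MeasurableSpace Ω} {μ : Measure Ω}

lemma ProbabilityTheory.HasSubgaussianMGF.measureReal_abs_ge_le {X : Ω → ℝ} {c : ℝ≥0}
    (h : HasSubgaussianMGF X c μ) {ε : ℝ} (hε : 0 ≤ ε) :
    μ.real {ω | ε ≤ |X ω|} ≤ 2 * exp (-ε ^ 2 / (2 * c)) := by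
  have hsplit : {ω | ε ≤ |X ω|} = {ω | ε ≤ X ω} ∪ {ω | ε ≤ (-X) ω} := by
    ext ω; exact le_abs (a := ε) (b := X ω)
  rw [hsplit]
  linarith [measureReal_union_le (μ := μ) {ω | ε ≤ X ω} {ω | ε ≤ (-X) ω},
    h.measure_ge_le hε, h.neg.measure_ge_le hε]

lemma exists_forall_notMem_of_sum_measureReal_lt_one [IsProbabilityMeasure μ] {ι : Type*}
    [Fintype ι] (s : ι → Set Ω) (h : ∑ i, μ.real (s i) < 1) :
    ∃ ω, ∀ i, ω ∉ s i := by
  by_contra! hcover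
  have hunion : ⋃ i, s i = Set.univ :=
    Set.eq_univ_of_forall fun ω => Set.mem_iUnion.mpr (hcover ω)
  have := measureReal_iUnion_fintype_le (μ := μ) s
  rw [hunion, probReal_univ] at this
  linarith

end Probability

section BernoulliLabelling

variable {E : Type*} [Fintype E]

noncomputable def bernoulliLabelling (p : E → unitInterval) : Measure (E → Bool) :=
  Measure.pi fun e => Ber(true, false, p e)

instance (p : E → unitInterval) : IsProbabilityMeasure (bernoulliLabelling p) := by
  unfold bernoulliLabelling; infer_instance

lemma bernoulliLabelling_measureReal_abs_sum_ge_le (p : E → unitInterval) {a : E → ℝ≥0}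
    {M : ℝ≥0} (haM : ∀ e, a e ≤ M) {ε : ℝ} (hε : 0 ≤ ε) :
    (bernoulliLabelling p).real {b | ε ≤ |∑ e, (a e : ℝ) * ((if b e then 1 else 0) - p e)|}
      ≤ 2 * exp (-ε ^ 2 / (2 * (Fintype.card E * ((M : ℝ) / 2) ^ 2))) := by
  set μ := bernoulliLabelling p
  let X : E → Bool → ℝ := fun e x => a e * (if x then 1 else 0)
  have hX (e : E) : Measurable fun b : E → Bool => X e (b e) :=
    (Measurable.of_discrete (f := X e)).comp (measurable_pi_apply e)
  have hmean (e : E) : μ[fun b => X e (b e)] = (a e : ℝ) * p e := by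
    rw [show μ = Measure.pi _ from rfl,
      integral_comp_eval Measurable.of_discrete.aestronglyMeasurable, integral_bernoulliMeasure]
    simp [X, mul_comm]
  have hsubG (e : E) :
      HasSubgaussianMGF (fun b => X e (b e) - (a e : ℝ) * p e) ((M / 2) ^ 2) μ := by
    have := hasSubgaussianMGF_of_mem_Icc (μ := μ) (X := fun b => X e (b e)) (a := 0) (b := M)
      (hX e).aemeasurable (ae_of_all _ fun b => by cases b e <;> simp [X, haM e])
    simpa [hmean] using this
  have hindep : iIndepFun (fun e b => X e (b e) - (a e : ℝ) * p e) μ :=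
    iIndepFun_pi (X := fun e x => X e x - (a e : ℝ) * p e) fun _ =>
      Measurable.of_discrete.aemeasurable
  have := (HasSubgaussianMGF.sum_of_iIndepFun hindep (s := univ) fun e _ => hsubG e)
    |>.measureReal_abs_ge_le hε
  convert this using 4
  · simp [X, mul_sub]
  · simp

end BernoulliLabelling

lemma four_pow_mul_two_mul_exp_neg_lt_one {N : ℕ} (hN : 1 ≤ N) :
    (4 : ℝ) ^ N * (2 * exp (-(8 * N))) < 1 := by
  have hbase : 4 * exp (-8) < 1 / 2 := by
    have := add_one_lt_exp (x := (8 : ℝ)) (by norm_num)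
    rw [exp_neg]
    field_simp
    linarith
  calc (4 : ℝ) ^ N * (2 * exp (-(8 * N))) = 2 * (4 * exp (-8)) ^ N := by
        rw [mul_pow, ← exp_nat_mul]; ring_nf
    _ ≤ 2 * (4 * exp (-8)) := by
        gcongr
        exact pow_le_of_le_one (by positivity) (by linarith) (by omega)
    _ < 1 := by linarith

section Sym2Discrepancy

variable {V : Type*} [Fintype V] [DecidableEq V]

def sym2Discrepancy (p : Sym2 V → unitInterval) (b : Sym2 V → Bool) (A B : Finset V) : ℝ :=
  ∑ e, (sym2Count A B e : ℝ) * ((if b e then 1 else 0) - p e)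

lemma bernoulliLabelling_measureReal_abs_sym2Discrepancy_ge_le [Nonempty V]
    (p : Sym2 V → unitInterval) (A B : Finset V) :
    (bernoulliLabelling p).real
        {b | 4 * (Fintype.card V : ℝ) ^ ((3 : ℝ) / 2) ≤ |sym2Discrepancy p b A B|}
      ≤ 2 * exp (-(8 * Fintype.card V)) := by
  set N := Fintype.card V
  have hoeffding := bernoulliLabelling_measureReal_abs_sum_ge_le p
    (a := fun e => sym2Count A B e) (M := 2) (fun e => by exact_mod_cast sym2Count_le_two A B e)
    (by positivity : 0 ≤ 4 * (N : ℝ) ^ ((3 : ℝ) / 2))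
  simp only [NNReal.coe_natCast, NNReal.coe_ofNat] at hoeffding
  refine hoeffding.trans ?_
  gcongr
  have hK : (0 : ℝ) < Fintype.card (Sym2 V) := by
    obtain ⟨v⟩ := ‹Nonempty V›
    exact_mod_cast Fintype.card_pos_iff.mpr ⟨s(v, v)⟩
  have hKN : (Fintype.card (Sym2 V) : ℝ) ≤ N ^ 2 := by exact_mod_cast card_sym2_le_sq
  have hpow : ((N : ℝ) ^ ((3 : ℝ) / 2)) ^ 2 = N ^ 3 := by
    rw [← rpow_natCast, ← rpow_mul (by positivity)]; norm_num
  rw [mul_pow, hpow, div_le_iff₀ (by positivity)]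
  nlinarith [mul_le_mul_of_nonneg_left hKN (by positivity : (0 : ℝ) ≤ 16 * N)]

lemma exists_labelling_abs_sym2Discrepancy_le (p : Sym2 V → unitInterval) :
    ∃ b : Sym2 V → Bool, ∀ A B : Finset V,
      |sym2Discrepancy p b A B| ≤ 4 * (Fintype.card V : ℝ) ^ ((3 : ℝ) / 2) := by
  set N := Fintype.card V
  rcases isEmpty_or_nonempty V with _ | _
  · exact ⟨fun _ => false, fun A B => by simp [sym2Discrepancy]; positivity⟩
  let bad (AB : Finset V × Finset V) : Set (Sym2 V → Bool) :=
    {b | 4 * (N : ℝ) ^ ((3 : ℝ) / 2) ≤ |sym2Discrepancy p b AB.1 AB.2|}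
  obtain ⟨b, hb⟩ := exists_forall_notMem_of_sum_measureReal_lt_one bad <|
    calc ∑ AB, (bernoulliLabelling p).real (bad AB)
        ≤ ∑ _AB : Finset V × Finset V, 2 * exp (-(8 * N)) := sum_le_sum fun AB _ =>
          bernoulliLabelling_measureReal_abs_sym2Discrepancy_ge_le p AB.1 AB.2
      _ = (4 : ℝ) ^ N * (2 * exp (-(8 * N))) := by
          simp [N, Fintype.card_finset, ← mul_pow]
      _ < 1 := four_pow_mul_two_mul_exp_neg_lt_one Fintype.card_pos
  exact ⟨b, fun A B => (not_le.mp (hb (A, B))).le⟩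

end Sym2Discrepancy

theorem exists_unweighted_approximation_general {V : Type*} [Fintype V]
    (w : V → V → ℝ) (hsymm : ∀ x y, w x y = w y x) (h0 : ∀ x y, 0 ≤ w x y)
    (h1 : ∀ x y, w x y ≤ 1) :
    ∃ g : V → V → ℝ, (∀ x y, g x y = g y x) ∧ (∀ x y, g x y = 0 ∨ g x y = 1) ∧
      ∀ A B : Finset V,
        |weightSum g A B - weightSum w A B| ≤ 4 * (Fintype.card V : ℝ) ^ ((3 : ℝ) / 2) := by
  classical
  let p : Sym2 V → unitInterval :=
    Sym2.lift ⟨fun x y => ⟨w x y, h0 x y, h1 x y⟩, fun x y => Subtype.ext (hsymm x y)⟩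
  obtain ⟨b, hb⟩ := exists_labelling_abs_sym2Discrepancy_le p
  refine ⟨fun x y => if b s(x, y) then 1 else 0, fun x y => by dsimp only; rw [Sym2.eq_swap],
    fun x y => by dsimp only; split_ifs <;> simp, fun A B => ?_⟩
  have hdiff : weightSum (fun x y => if b s(x, y) then 1 else 0) A B - weightSum w A B
      = sym2Discrepancy p b A B := by
    rw [sym2Discrepancy, ← sum_sum_sym2_eq_sum_sym2Count_mul]
    simp only [weightSum, ← sum_sub_distrib, p, Sym2.lift_mk]
  exact hdiff ▸ hb A B

/-- Every weighted graph with weights in `[0,1]` on `N` vertices can be approximated by an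
unweighted graph so that all pairwise edge counts differ by at most `4 N^(3/2)`. -/
theorem exists_unweighted_approximation {V : Type*} [Fintype V] [DecidableEq V]
    (w : V → V → ℝ) (hsymm : ∀ x y, w x y = w y x) (h0 : ∀ x y, 0 ≤ w x y)
    (h1 : ∀ x y, w x y ≤ 1) :
    ∃ g : V → V → ℝ, (∀ x y, g x y = g y x) ∧ (∀ x y, g x y = 0 ∨ g x y = 1) ∧
      ∀ A B : Finset V,
        |weightSum g A B - weightSum w A B| ≤ 4 * (Fintype.card V : ℝ) ^ ((3 : ℝ) / 2) :=
  exists_unweighted_approximation_general w hsymm h0 h1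
end

section
/- Define a sequence of natural numbers by k_0 = 1 and k_{i+1} = k_i·2^{k_i + 1} for i ≥ 0, and let T be the tower function defined by T(1) = 2 and T(n+1) = 2^{T(n)}. Then for every i ≥ 0, k_i ≤ T(i+2)/4. -/
/-!
Induction on `i` with the invariant `4 k_i ≤ T(i+2)`. Writing `T = T(i+2) = 2 ^ T(i+1)`,
`4 k_{i+1} = 4 k_i · 2 ^ (k_i + 1) ≤ 2 ^ (T(i+1) + k_i + 1)`, and the exponent is at most `T`
because `2 T(i+1) ≤ T` and `k_i + 1 ≤ T / 4 + 1 ≤ T / 2` once `T ≥ 4`.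
-/

theorem Nat.two_mul_le_two_pow (n : ℕ) : 2 * n ≤ 2 ^ n := by
  cases n with
  | zero => simp
  | succ n =>
    rw [pow_succ, mul_comm (2 ^ n)]
    exact Nat.mul_le_mul_left 2 n.lt_two_pow_self

theorem tower_succ (n : ℕ) : tower (n + 1) = 2 ^ tower n := rfl

theorem two_mul_tower_le_tower_succ (n : ℕ) : 2 * tower n ≤ tower (n + 1) :=
  Nat.two_mul_le_two_pow (tower n)

theorem four_le_tower_add_two (n : ℕ) : 4 ≤ tower (n + 2) := by
  induction n with
  | zero => decide
  | succ n ih => linarith [two_mul_tower_le_tower_succ (n + 2)]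

theorem four_mul_le_tower_of_rec (k : ℕ → ℕ) (h0 : k 0 = 1)
    (hrec : ∀ i, k (i + 1) = k i * 2 ^ (k i + 1)) (i : ℕ) :
    4 * k i ≤ tower (i + 2) := by
  induction i with
  | zero => simp [h0, tower]
  | succ i ih =>
    have hT : 2 * tower (i + 1) ≤ tower (i + 2) := two_mul_tower_le_tower_succ (i + 1)
    have h4 := four_le_tower_add_two i
    have hexp : tower (i + 1) + (k i + 1) ≤ tower (i + 2) := by omega
    calc 4 * k (i + 1) = 4 * k i * 2 ^ (k i + 1) := by rw [hrec, mul_assoc]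
      _ ≤ tower (i + 2) * 2 ^ (k i + 1) := Nat.mul_le_mul_right _ ih
      _ = 2 ^ (tower (i + 1) + (k i + 1)) := by rw [tower_succ (i + 1), ← pow_add]
      _ ≤ 2 ^ tower (i + 2) := Nat.pow_le_pow_right two_pos hexp

/-- If `k 0 = 1` and `k (i+1) = k i · 2^(k i + 1)`, then `k i ≤ tower (i+2) / 4` for all
`i ≥ 0`. -/
theorem iterated_exponential_le_tower (k : ℕ → ℕ) (h0 : k 0 = 1)
    (hrec : ∀ i, k (i + 1) = k i * 2 ^ (k i + 1)) (i : ℕ) :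
    (k i : ℝ) ≤ (tower (i + 2) : ℝ) / 4 := by
  have h : ((4 * k i : ℕ) : ℝ) ≤ tower (i + 2) := by
    exact_mod_cast four_mul_le_tower_of_rec k h0 hrec i
  push_cast at h
  linarith
end
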